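/- arXiv:2602.21674 — 2 statements merged into one kernel-verified Lean document; each statement's English description precedes it below -/
import Mathlib

section
/- Two e-persistent Mealy machines with the same input alphabet that agree (produce equal output words) on every input word in which the output contains at most one occurrence of e, agree on all input words. More precisely: if H and M are e-persistent and for every input word σ such that the output λ^H(σ) does not contain e·e as a factor we have λ^H(σ) = λ^M(σ), then λ^H(σ) = λ^M(σ) for all σ ∈ I*. -/
structure Mealy (I O : Type) where
  Q : Type
  q0 : Q
  trans : Q → I → Q
  out1 : Q → I → O

namespace Mealy

variable {I O : Type}

def run (M : Mealy I O) : M.Q → List I → M.Q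
  | q, [] => q
  | q, i :: σ => M.run (M.trans q i) σ

def out (M : Mealy I O) : M.Q → List I → List O
  | _, [] => []
  | q, i :: σ => M.out1 q i :: M.out (M.trans q i) σ

/-- `M` is `e`-persistent: once the output word ends in `e`, appending any
input keeps the last output equal to `e`. -/
def EPersistent (M : Mealy I O) (e : O) : Prop :=
  ∀ (σ : List I) (i : I),
    (M.out M.q0 σ).getLast? = some e →
    (M.out M.q0 (σ ++ [i])).getLast? = some e

/-! Induct on the input word. If the `H`-output of `σ·i` contains `e·e`, then `H` has already
output an `e` on `σ`, and by persistence every later output of `H` is `e`; by induction the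
same holds for `M`, so both machines answer `e` to the last letter. -/

variable {M : Mealy I O}

theorem out_append (q : M.Q) (σ τ : List I) :
    M.out q (σ ++ τ) = M.out q σ ++ M.out (M.run q σ) τ := by
  induction σ generalizing q with
  | nil => rfl
  | cons i σ ih => simp only [List.cons_append, out, run, ih]

theorem out_concat (q : M.Q) (σ : List I) (i : I) :
    M.out q (σ ++ [i]) = M.out q σ ++ [M.out1 (M.run q σ) i] :=
  out_append q σ [i]

theorem out_take (q : M.Q) (σ : List I) (n : ℕ) :
    M.out q (σ.take n) = (M.out q σ).take n := by
  induction σ generalizing q n with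
  | nil => simp [out]
  | cons i σ ih => cases n <;> simp [out, ih]

namespace EPersistent

variable {e : O}

theorem getLast?_out_append (h : M.EPersistent e) {σ : List I}
    (hσ : (M.out M.q0 σ).getLast? = some e) (τ : List I) :
    (M.out M.q0 (σ ++ τ)).getLast? = some e := by
  induction τ using List.reverseRecOn with
  | nil => simpa using hσ
  | append_singleton τ i ih => simpa [List.append_assoc] using h (σ ++ τ) i ih

theorem getLast?_out_of_mem (h : M.EPersistent e) {σ : List I} (he : e ∈ M.out M.q0 σ) :
    (M.out M.q0 σ).getLast? = some e := by
  obtain ⟨s, t, hst⟩ := List.mem_iff_append.mp he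
  have hprefix : M.out M.q0 (σ.take (s.length + 1)) = s ++ [e] := by
    rw [out_take, hst, List.take_append]; simp
  have hlast : (M.out M.q0 (σ.take (s.length + 1))).getLast? = some e := by
    rw [hprefix, List.getLast?_concat]
  simpa using h.getLast?_out_append hlast (σ.drop (s.length + 1))

theorem out_concat_of_mem (h : M.EPersistent e) {σ : List I} (he : e ∈ M.out M.q0 σ)
    (i : I) : M.out M.q0 (σ ++ [i]) = M.out M.q0 σ ++ [e] := by
  have hlast := h σ i (h.getLast?_out_of_mem he)
  rw [out_concat, List.getLast?_concat, Option.some_inj] at hlast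
  rw [out_concat, hlast]

end EPersistent

end Mealy

theorem List.mem_of_pair_infix_concat {α : Type*} {a b c : α} {l : List α}
    (h : [a, b] <:+: l ++ [c]) : a ∈ l := by
  rcases List.infix_concat_iff.mp h with ⟨t, ht⟩ | hl
  · have hl : t ++ [a] = l :=
      (List.append_inj' (by simpa using ht : t ++ [a] ++ [b] = l ++ [c]) rfl).1
    simp [← hl]
  · exact hl.subset (by simp)

/-- Two `e`-persistent Mealy machines over the same input alphabet that agree
on every input word whose `H`-output does not contain `e·e` as a factor agree
on all input words. -/
theorem stmt1 {I O : Type} (H M : Mealy I O) (e : O)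
    (hH : H.EPersistent e) (hM : M.EPersistent e)
    (hagree : ∀ σ : List I, ¬ ([e, e] <:+: H.out H.q0 σ) →
      H.out H.q0 σ = M.out M.q0 σ) :
    ∀ σ : List I, H.out H.q0 σ = M.out M.q0 σ := by
  intro σ
  induction σ using List.reverseRecOn with
  | nil => rfl
  | append_singleton σ i ih =>
    by_cases hee : [e, e] <:+: H.out H.q0 (σ ++ [i])
    · have heH : e ∈ H.out H.q0 σ :=
        List.mem_of_pair_infix_concat (Mealy.out_concat H.q0 σ i ▸ hee)
      have heM : e ∈ M.out M.q0 σ := ih ▸ heH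
      rw [hH.out_concat_of_mem heH, hM.out_concat_of_mem heM, ih]
    · exact hagree _ hee
end

section
/- In an observation tree, if a frontier state r is not apart from two distinct basis states q and q', and σ is a witness of the apartness q # q' (i.e., λ^T(q,σ) and λ^T(q',σ) are defined and differ), then after extending the tree so that λ^T(r,σ) becomes defined, r is apart from q or apart from q'. -/
/-- A partial Mealy machine over a fixed state set `Q`. -/
structure PM (Q I O : Type) where
  trans : Q → I → Option Q
  out1 : Q → I → Option O

namespace PM

variable {Q I O : Type}

def pout (M : PM Q I O) : Q → List I → Option (List O)
  | _, [] => some []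
  | q, i :: σ =>
    match M.out1 q i, M.trans q i with
    | some o, some q' => (M.pout q' σ).map (o :: ·)
    | _, _ => none

/-- States `p` and `q` are apart: some input word on which both outputs are
defined produces different output words. -/
def Apart (M : PM Q I O) (p q : Q) : Prop :=
  ∃ (σ : List I) (a b : List O),
    M.pout p σ = some a ∧ M.pout q σ = some b ∧ a ≠ b

/-- `M'` extends `M`: every defined transition/output of `M` is also defined,
with the same value, in `M'`. -/
def Extends (M M' : PM Q I O) : Prop :=
  (∀ q i x, M.trans q i = some x → M'.trans q i = some x) ∧
  (∀ q i o, M.out1 q i = some o → M'.out1 q i = some o)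

end PM

namespace PM

variable {Q I O : Type}

theorem Extends.pout_eq {M M' : PM Q I O} (hext : M.Extends M') {p : Q} {σ : List I}
    {a : List O} (h : M.pout p σ = some a) : M'.pout p σ = some a := by
  induction σ generalizing p a with
  | nil => simpa [pout] using h
  | cons i σ ih =>
    simp only [pout] at h ⊢
    rcases hout : M.out1 p i with _ | o <;> rcases htrans : M.trans p i with _ | p' <;>
      simp only [hout, htrans, Option.map_eq_some_iff, reduceCtorEq] at h
    obtain ⟨a', ha', rfl⟩ := h
    rw [hext.2 _ _ _ hout, hext.1 _ _ _ htrans]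
    simp only [ih ha', Option.map_some]

theorem apart_or_apart_of_pout_ne {M : PM Q I O} {r q q' : Q} {σ : List I} {a b c : List O}
    (ha : M.pout q σ = some a) (hb : M.pout q' σ = some b) (hab : a ≠ b)
    (hc : M.pout r σ = some c) : M.Apart r q ∨ M.Apart r q' := by
  by_cases hca : c = a
  · exact .inr ⟨σ, c, b, hc, hb, hca ▸ hab⟩
  · exact .inl ⟨σ, c, a, hc, ha, hca⟩

end PM

theorem stmt15_general {Q I O : Type} (M M' : PM Q I O) (r q q' : Q)
    (σ : List I) (a b : List O)
    (ha : M.pout q σ = some a) (hb : M.pout q' σ = some b) (hab : a ≠ b)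
    (hext : M.Extends M') (c : List O) (hc : M'.pout r σ = some c) :
    M'.Apart r q ∨ M'.Apart r q' :=
  PM.apart_or_apart_of_pout_ne (hext.pout_eq ha) (hext.pout_eq hb) hab hc

/-- If, in an observation tree `M`, a frontier state `r` is not apart from
two distinct basis states `q` and `q'`, and `σ` witnesses `q # q'`, then
after extending the tree to `M'` so that the output of `r` on `σ` becomes
defined, `r` is apart from `q` or apart from `q'`. -/
theorem stmt15 {Q I O : Type} (M M' : PM Q I O) (r q q' : Q)
    (hq : ¬ M.Apart r q) (hq' : ¬ M.Apart r q') (hqq : q ≠ q')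
    (σ : List I) (a b : List O)
    (ha : M.pout q σ = some a) (hb : M.pout q' σ = some b) (hab : a ≠ b)
    (hext : M.Extends M') (c : List O) (hc : M'.pout r σ = some c) :
    M'.Apart r q ∨ M'.Apart r q' :=
  stmt15_general M M' r q q' σ a b ha hb hab hext c hc
end
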